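/- arXiv:2311.16219 — 5 statements merged into one kernel-verified Lean document; each statement's English description precedes it below -/
import Mathlib

section
/- Let $\mathcal{E} \geq 2$, let $\mathcal{U}, \mathcal{F} \in \mathbb{C}[\alpha_1,\ldots,\alpha_\mathcal{E}]$ be homogeneous of degrees $\L$ and $\L+1$ respectively, set $\mathcal{G} = \mathcal{U}+\mathcal{F}$, and set $\mathcal{H}(\alpha_1,\ldots,\alpha_{\mathcal{E}-1},y) = \mathcal{U}(\alpha_1,\ldots,\alpha_{\mathcal{E}-1},1) + y \cdot \mathcal{F}(\alpha_1,\ldots,\alpha_{\mathcal{E}-1},1)$. Then for every point $\bar{\alpha} = (\alpha_1,\ldots,\alpha_{\mathcal{E}-1},y)$ with all coordinates nonzero, the point $\bar{\alpha}$ satisfies $\mathcal{H}(\bar{\alpha}) = 0$ and $\partial \mathcal{H}/\partial \alpha_j(\bar{\alpha}) = 0$ for $j = 1,\ldots,\mathcal{E}-1$ and $\partial \mathcal{H}/\partial y(\bar{\alpha}) = 0$, if and only if the point $\varphi(\bar{\alpha}) = (y\alpha_1,\ldots,y\alpha_{\mathcal{E}-1},y)$ satisfies $\mathcal{G}(\varphi(\bar{\alpha}))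 = 0$ and $\partial \mathcal{G}/\partial \alpha_i(\varphi(\bar{\alpha})) = 0$ for $i = 1,\ldots,\mathcal{E}$. -/
open MvPolynomial

/-- The map `φ : (α₁,…,α_{E-1}, y) ↦ (yα₁,…,yα_{E-1}, y)`, where the last
coordinate plays the role of `y` and `E = n + 1`. -/
def phiMap (n : ℕ) : (Fin (n + 1) → ℂ) → (Fin (n + 1) → ℂ) :=
  fun α i => if i = Fin.last n then α (Fin.last n) else α (Fin.last n) * α i

/-- Dehomogenization of a polynomial in `E = n+1` variables with respect to the
last variable: substitute `1` for the last variable (the result is regarded as a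
polynomial in all `E` variables, not involving the last one). -/
noncomputable def dehom (n : ℕ) (P : MvPolynomial (Fin (n + 1)) ℂ) :
    MvPolynomial (Fin (n + 1)) ℂ :=
  aeval (fun i : Fin (n + 1) => if i = Fin.last n then 1 else X i) P

/-!
Write `ᾱ = (α, y)` and `β = (α, 1)`, so that `φ(ᾱ) = y • β`. By homogeneity
`𝒢(yβ) = y^L ℋ(ᾱ)` and `y ∂ᵢ𝒢(yβ) = y^L gᵢ` with `gᵢ = ∂ᵢ𝒰(β) + y ∂ᵢℱ(β)`, while
`∂ⱼℋ(ᾱ) = gⱼ` for `j < E` and `∂_y ℋ(ᾱ) = ℱ(β)`. So on the torus the two critical systems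
differ only in asking `ℱ(β) = 0` versus `g_E = 0`, and Euler's identity
`∑ βᵢ gᵢ = L ℋ(ᾱ) + y ℱ(β)` turns either condition into the other once `ℋ(ᾱ) = 0` and
the remaining `gⱼ` vanish.
-/

namespace MvPolynomial

variable {R σ : Type*} [CommSemiring R] {P : MvPolynomial σ R} {d : ℕ}

theorem IsHomogeneous.eval_smul (hP : P.IsHomogeneous d) (c : R) (x : σ → R) :
    eval (c • x) P = c ^ d * eval x P := by
  conv_lhs => rw [P.as_sum]
  conv_rhs => rw [P.as_sum]
  simp only [map_sum, Finset.mul_sum, eval_monomial]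
  refine Finset.sum_congr rfl fun s hs => ?_
  have hdeg : ∑ i ∈ s.support, s i = d := by
    rw [← hP (mem_support_iff.mp hs), Finsupp.weight_apply, Finsupp.sum]
    simp
  simp only [Finsupp.prod, Pi.smul_apply, smul_eq_mul, mul_pow, Finset.prod_mul_distrib,
    Finset.prod_pow_eq_pow_sum, hdeg]
  ring

theorem IsHomogeneous.mul_eval_smul_pderiv (hP : P.IsHomogeneous d) (c : R) (x : σ → R)
    (i : σ) : c * eval (c • x) (pderiv i P) = c ^ d * eval x (pderiv i P) := by
  rcases d with _ | d
  · rw [totalDegree_eq_zero_iff_eq_C.mp ((totalDegree_zero_iff_isHomogeneous σ).mpr hP)]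
    simp
  · rw [hP.pderiv.eval_smul, Nat.add_sub_cancel, ← mul_assoc, ← pow_succ']

theorem IsHomogeneous.sum_mul_eval_pderiv [Fintype σ] (hP : P.IsHomogeneous d) (x : σ → R) :
    ∑ i, x i * eval x (pderiv i P) = d * eval x P := by
  simpa [nsmul_eq_mul] using congrArg (eval x) hP.sum_X_mul_pderiv

end MvPolynomial

section Dehomogenization

variable {n : ℕ}

theorem eval_dehom (x : Fin (n + 1) → ℂ) (P : MvPolynomial (Fin (n + 1)) ℂ) :
    eval x (dehom n P) = eval (Function.update x (Fin.last n) 1) P := by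
  rw [dehom, aeval_eq_bind₁]
  refine (eval₂Hom_bind₁ _ _ _ _).trans (congrArg (eval · P) (funext fun i => ?_))
  by_cases hi : i = Fin.last n <;> simp [hi]

theorem pderiv_dehom {j : Fin (n + 1)} (hj : j ≠ Fin.last n)
    (P : MvPolynomial (Fin (n + 1)) ℂ) :
    pderiv j (dehom n P) = dehom n (pderiv j P) := by
  induction P using MvPolynomial.induction_on with
  | C a => simp [dehom]
  | add p q hp hq => simp only [dehom, map_add] at hp hq ⊢; rw [hp, hq]
  | mul_X p i hp =>
    simp only [dehom] at hp ⊢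
    rw [map_mul, aeval_X, pderiv_mul, hp, pderiv_mul, map_add, map_mul, map_mul, aeval_X]
    by_cases hi : i = Fin.last n
    · subst hi; simp [pderiv_X_of_ne (Ne.symm hj)]
    · by_cases hij : i = j
      · subst hij; simp [hi]
      · simp [hi, pderiv_X_of_ne hij]

theorem pderiv_last_dehom (P : MvPolynomial (Fin (n + 1)) ℂ) :
    pderiv (Fin.last n) (dehom n P) = 0 := by
  refine pderiv_eq_zero_of_notMem_vars fun h => ?_
  rw [dehom, aeval_eq_bind₁] at h
  obtain ⟨i, -, hi⟩ := Finset.mem_biUnion.mp (vars_bind₁ _ _ h)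
  by_cases h' : i = Fin.last n <;> simp_all [vars_X]

theorem eval_pderiv_dehom_add_X_last_mul_dehom (U F : MvPolynomial (Fin (n + 1)) ℂ)
    (x : Fin (n + 1) → ℂ) (j : Fin (n + 1)) :
    eval x (pderiv j (dehom n U + X (Fin.last n) * dehom n F)) =
      if j = Fin.last n then eval (Function.update x (Fin.last n) 1) F
      else eval (Function.update x (Fin.last n) 1) (pderiv j U) +
        x (Fin.last n) * eval (Function.update x (Fin.last n) 1) (pderiv j F) := by
  split_ifs with hj
  · simp [hj, pderiv_last_dehom, eval_dehom]
  · simp [pderiv_dehom hj, eval_dehom, pderiv_X_of_ne (Ne.symm hj)]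

theorem phiMap_eq_smul (x : Fin (n + 1) → ℂ) :
    phiMap n x = x (Fin.last n) • Function.update x (Fin.last n) 1 := by
  funext i
  by_cases hi : i = Fin.last n <;> simp [phiMap, hi]

end Dehomogenization

theorem critical_conditions_iff_of_euler {K ι : Type*} [Field K] [Fintype ι] [DecidableEq ι]
    {k : ι} {β g : ι → K} {u f y : K} {L : ℕ} (hβ : β k = 1) (hy : y ≠ 0)
    (heuler : ∑ j, β j * g j = L * (u + y * f) + y * f) :
    (u + y * f = 0 ∧ ∀ j, (if j = k then f else g j) = 0) ↔
      (u + y * f = 0 ∧ ∀ j, g j = 0) := by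
  refine and_congr_right fun hu => ?_
  rw [hu, mul_zero, zero_add] at heuler
  constructor
  · intro h j
    have hg : ∀ j ≠ k, g j = 0 := fun j hj => by simpa [hj] using h j
    have hf : f = 0 := by simpa using h k
    obtain rfl | hj := eq_or_ne j k
    · rwa [Finset.sum_eq_single j (fun i _ hi => by rw [hg i hi, mul_zero]) (by simp), hβ,
        one_mul, hf, mul_zero] at heuler
    · exact hg j hj
  · intro h j
    split_ifs
    · simpa [h, hy] using heuler.symm
    · exact h j

theorem statement1_general (n L : ℕ)
    (U F : MvPolynomial (Fin (n + 1)) ℂ)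
    (hU : U.IsHomogeneous L) (hF : F.IsHomogeneous (L + 1)) :
    ∀ ᾱ : Fin (n + 1) → ℂ, (∀ i, ᾱ i ≠ 0) →
      ((eval ᾱ (dehom n U + X (Fin.last n) * dehom n F) = 0 ∧
        ∀ j : Fin (n + 1),
          eval ᾱ (pderiv j (dehom n U + X (Fin.last n) * dehom n F)) = 0) ↔
       (eval (phiMap n ᾱ) (U + F) = 0 ∧
        ∀ i : Fin (n + 1), eval (phiMap n ᾱ) (pderiv i (U + F)) = 0)) := by
  intro x hx
  set y := x (Fin.last n)
  set β := Function.update x (Fin.last n) 1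
  set g := fun j => eval β (pderiv j U) + y * eval β (pderiv j F)
  have hy : y ≠ 0 := hx _
  have hH : eval x (dehom n U + X (Fin.last n) * dehom n F) = eval β U + y * eval β F := by
    simp [eval_dehom, β, y]
  have hG : eval (phiMap n x) (U + F) = y ^ L * (eval β U + y * eval β F) := by
    rw [phiMap_eq_smul, eval_add, hU.eval_smul, hF.eval_smul]; ring
  have hGj : ∀ j, eval (phiMap n x) (pderiv j (U + F)) = 0 ↔ g j = 0 := by
    intro j
    have : y * eval (phiMap n x) (pderiv j (U + F)) = y ^ L * g j := by
      rw [phiMap_eq_smul, map_add, eval_add, mul_add, hU.mul_eval_smul_pderiv,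
        hF.mul_eval_smul_pderiv]; ring
    rw [← mul_right_inj' hy, this, mul_zero, mul_eq_zero, or_iff_right (pow_ne_zero _ hy)]
  have heuler : ∑ j, β j * g j = L * (eval β U + y * eval β F) + y * eval β F := by
    simp only [g, mul_add, Finset.sum_add_distrib, mul_left_comm _ y, ← Finset.mul_sum,
      hU.sum_mul_eval_pderiv, hF.sum_mul_eval_pderiv]
    push_cast; ring
  simp only [hH, eval_pderiv_dehom_add_X_last_mul_dehom, hG, hGj, mul_eq_zero, pow_eq_zero_iff', hy, false_and, false_or]
  exact critical_conditions_iff_of_euler (by simp [β]) hy heuler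

/-- with `𝒢 = 𝒰 + ℱ` and `ℋ = 𝒰̄ + y·ℱ̄` (where `y` is the last
variable), a torus point `ᾱ` is a critical point of `ℋ`
(i.e. `ℋ(ᾱ) = 0` and all partial derivatives of `ℋ` vanish at `ᾱ`)
iff `φ(ᾱ)` is a critical point of `𝒢`. -/
theorem statement1 (n L : ℕ) (hE : 2 ≤ n + 1)
    (U F : MvPolynomial (Fin (n + 1)) ℂ)
    (hU : U.IsHomogeneous L) (hF : F.IsHomogeneous (L + 1)) :
    ∀ ᾱ : Fin (n + 1) → ℂ, (∀ i, ᾱ i ≠ 0) →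
      ((eval ᾱ (dehom n U + X (Fin.last n) * dehom n F) = 0 ∧
        ∀ j : Fin (n + 1),
          eval ᾱ (pderiv j (dehom n U + X (Fin.last n) * dehom n F)) = 0) ↔
       (eval (phiMap n ᾱ) (U + F) = 0 ∧
        ∀ i : Fin (n + 1), eval (phiMap n ᾱ) (pderiv i (U + F)) = 0)) :=
  statement1_general n L U F hU hF
end

section
/- Let $a, b, c, d$ be positive real numbers with $a \neq b$, $c \neq d$, and $bc \neq ad$. Then $\int_0^\infty \int_0^\infty \frac{d\alpha_1\, d\alpha_2}{\big[(1+\alpha_1)(a + b\alpha_1 + c\alpha_2 + d\alpha_1\alpha_2)\big]^2} \;=\; \frac{1}{(a-b)(c-d)} \;-\; \frac{1}{bc - ad}\left[ \frac{b^2 \log(a/b)}{(a-b)^2} + \frac{d^2 \log(d/c)}{(c-d)^2} \right]$, where $\log$ is the real natural logarithm. -/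
/-!
Fubini, integrating in `α₂` first. For fixed `α₁ = x > 0` the inner integrand is
`(1 + x)⁻² (p + q α₂)⁻²` with `p = a + b x`, `q = c + d x`, and `∫₀^∞ (p + q y)⁻² dy = 1 / (p q)`.
What remains is `∫₀^∞ dx / ((1 + x)² (a + b x) (c + d x))`; the three linear factors have
distinct roots, so partial fractions give an explicit antiderivative, a rational term plus
logarithms, whose limit at `∞` is finite.
-/

open MeasureTheory Set Filter Topology Real

section InvSqAffine

variable {p q : ℝ}

lemma hasDerivAt_neg_inv_mul_affine (hq : q ≠ 0) {y : ℝ} (hy : p + q * y ≠ 0) :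
    HasDerivAt (fun y => -(q * (p + q * y))⁻¹) ((p + q * y) ^ 2)⁻¹ y := by
  have h : HasDerivAt (fun y => q * (p + q * y)) (q * q) y := by
    simpa using (((hasDerivAt_id y).const_mul q).const_add p).const_mul q
  refine (h.inv (mul_ne_zero hq hy)).neg.congr_deriv ?_
  field_simp

lemma tendsto_neg_inv_mul_affine_atTop (hq : 0 < q) :
    Tendsto (fun y => -(q * (p + q * y))⁻¹) atTop (𝓝 0) := by
  simpa using ((tendsto_atTop_add_const_left _ p
    (tendsto_id.const_mul_atTop hq)).const_mul_atTop hq).inv_tendsto_atTop.neg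

lemma integral_Ioi_inv_sq_affine (hp : 0 < p) (hq : 0 < q) :
    IntegrableOn (fun y => ((p + q * y) ^ 2)⁻¹) (Ioi 0) ∧
      ∫ y in Ioi 0, ((p + q * y) ^ 2)⁻¹ = (p * q)⁻¹ := by
  have hderiv : ∀ y ∈ Ici (0 : ℝ), HasDerivAt (fun y => -(q * (p + q * y))⁻¹)
      ((p + q * y) ^ 2)⁻¹ y := fun y (hy : 0 ≤ y) =>
    hasDerivAt_neg_inv_mul_affine hq.ne' (by positivity)
  have hpos : ∀ y ∈ Ioi (0 : ℝ), 0 ≤ ((p + q * y) ^ 2)⁻¹ := fun y _ => by positivity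
  refine ⟨integrableOn_Ioi_deriv_of_nonneg' hderiv hpos (tendsto_neg_inv_mul_affine_atTop hq), ?_⟩
  rw [integral_Ioi_of_hasDerivAt_of_nonneg' hderiv hpos (tendsto_neg_inv_mul_affine_atTop hq)]
  simp [mul_comm]

end InvSqAffine

lemma tendsto_log_affine_sub_log_one_add_atTop {a b : ℝ} (ha : 0 < a) (hb : 0 < b) :
    Tendsto (fun x => log (a + b * x) - log (1 + x)) atTop (𝓝 (log b)) := by
  have hlim : Tendsto (fun x => b + (a - b) * (1 + x)⁻¹) atTop (𝓝 b) := by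
    simpa using ((tendsto_atTop_add_const_left _ 1 tendsto_id).inv_tendsto_atTop.const_mul
      (a - b)).const_add b
  refine ((continuousAt_log hb.ne').tendsto.comp hlim).congr' ?_
  filter_upwards [eventually_gt_atTop 0] with x hx
  have h1 : 0 < 1 + x := by positivity
  rw [Function.comp_apply, ← log_div (by positivity) h1.ne']
  congr 1
  field_simp
  ring

noncomputable def partialFractionAntideriv (a b c d x : ℝ) : ℝ :=
  -((a - b) * (c - d) * (1 + x))⁻¹
    + b ^ 2 / ((a - b) ^ 2 * (b * c - a * d)) * (log (a + b * x) - log (1 + x))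
    - d ^ 2 / ((c - d) ^ 2 * (b * c - a * d)) * (log (c + d * x) - log (1 + x))

section PartialFractions

variable {a b c d : ℝ}

lemma hasDerivAt_partialFractionAntideriv (hab : a ≠ b) (hcd : c ≠ d) (hbcad : b * c ≠ a * d)
    {x : ℝ} (h1 : 1 + x ≠ 0) (h2 : a + b * x ≠ 0) (h3 : c + d * x ≠ 0) :
    HasDerivAt (partialFractionAntideriv a b c d)
      ((1 + x) ^ 2 * (a + b * x) * (c + d * x))⁻¹ x := by
  have hlin : ∀ p q : ℝ, HasDerivAt (fun x => p + q * x) (q * 1) x := fun p q =>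
    ((hasDerivAt_id' x).const_mul q).const_add p
  have hlog1 := ((hasDerivAt_id' x).const_add 1).log h1
  have hab' := sub_ne_zero.2 hab
  have hcd' := sub_ne_zero.2 hcd
  have hrat := (((hasDerivAt_id' x).const_add 1).const_mul ((a - b) * (c - d))).inv
    (mul_ne_zero (mul_ne_zero hab' hcd') h1) |>.neg
  refine ((hrat.add ((((hlin a b).log h2).sub hlog1).const_mul _)).sub
    ((((hlin c d).log h3).sub hlog1).const_mul _)).congr_deriv ?_
  have := sub_ne_zero.2 hbcad
  field_simp
  ring

lemma tendsto_partialFractionAntideriv_atTop (ha : 0 < a) (hb : 0 < b) (hc : 0 < c) (hd : 0 < d) :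
    Tendsto (partialFractionAntideriv a b c d) atTop
      (𝓝 (b ^ 2 / ((a - b) ^ 2 * (b * c - a * d)) * log b
        - d ^ 2 / ((c - d) ^ 2 * (b * c - a * d)) * log d)) := by
  have hrat : Tendsto (fun x => -((a - b) * (c - d) * (1 + x))⁻¹) atTop (𝓝 0) := by
    simpa using ((tendsto_atTop_add_const_left _ 1 tendsto_id).inv_tendsto_atTop.mul_const
      ((a - b) * (c - d))⁻¹).neg
  have h := (hrat.add ((tendsto_log_affine_sub_log_one_add_atTop ha hb).const_mul
    (b ^ 2 / ((a - b) ^ 2 * (b * c - a * d))))).sub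
    ((tendsto_log_affine_sub_log_one_add_atTop hc hd).const_mul
      (d ^ 2 / ((c - d) ^ 2 * (b * c - a * d))))
  rwa [zero_add] at h

lemma integral_Ioi_inv_partialFractions (ha : 0 < a) (hb : 0 < b) (hc : 0 < c) (hd : 0 < d)
    (hab : a ≠ b) (hcd : c ≠ d) (hbcad : b * c ≠ a * d) :
    IntegrableOn (fun x => ((1 + x) ^ 2 * (a + b * x) * (c + d * x))⁻¹) (Ioi 0) ∧
      ∫ x in Ioi 0, ((1 + x) ^ 2 * (a + b * x) * (c + d * x))⁻¹ =
        1 / ((a - b) * (c - d)) - (1 / (b * c - a * d)) *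
          (b ^ 2 * log (a / b) / (a - b) ^ 2 + d ^ 2 * log (d / c) / (c - d) ^ 2) := by
  have hderiv : ∀ x ∈ Ici (0 : ℝ), HasDerivAt (partialFractionAntideriv a b c d)
      ((1 + x) ^ 2 * (a + b * x) * (c + d * x))⁻¹ x := fun x (hx : 0 ≤ x) =>
    hasDerivAt_partialFractionAntideriv hab hcd hbcad (by positivity) (by positivity)
      (by positivity)
  have hpos : ∀ x ∈ Ioi (0 : ℝ), 0 ≤ ((1 + x) ^ 2 * (a + b * x) * (c + d * x))⁻¹ :=
    fun x (hx : 0 < x) => by positivity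
  have hlim := tendsto_partialFractionAntideriv_atTop ha hb hc hd
  refine ⟨integrableOn_Ioi_deriv_of_nonneg' hderiv hpos hlim, ?_⟩
  rw [integral_Ioi_of_hasDerivAt_of_nonneg' hderiv hpos hlim, partialFractionAntideriv,
    log_div ha.ne' hb.ne', log_div hd.ne' hc.ne']
  have := sub_ne_zero.2 hab
  have := sub_ne_zero.2 hcd
  have := sub_ne_zero.2 hbcad
  simp only [mul_zero, add_zero, log_one, mul_one]
  field_simp
  ring

end PartialFractions

lemma integral_Ioi_fiber {a b c d x : ℝ} (hp : 0 < a + b * x) (hq : 0 < c + d * x) :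
    IntegrableOn (fun y => 1 / ((1 + x) * (a + b * x + c * y + d * x * y)) ^ 2) (Ioi 0) ∧
      ∫ y in Ioi 0, 1 / ((1 + x) * (a + b * x + c * y + d * x * y)) ^ 2 =
        ((1 + x) ^ 2 * (a + b * x) * (c + d * x))⁻¹ := by
  have hfactor : (fun y => 1 / ((1 + x) * (a + b * x + c * y + d * x * y)) ^ 2) =
      fun y => ((1 + x) ^ 2)⁻¹ * (((a + b * x) + (c + d * x) * y) ^ 2)⁻¹ := by
    ext y
    rw [one_div, mul_pow, mul_inv]
    ring
  obtain ⟨hint, hval⟩ := integral_Ioi_inv_sq_affine hp hq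
  rw [hfactor, integral_const_mul, hval]
  exact ⟨hint.const_mul _, by simp only [mul_inv]; ring⟩

lemma integrableOn_Ioi_prod_Ioi {a b c d : ℝ} (ha : 0 < a) (hb : 0 < b) (hc : 0 < c)
    (hd : 0 < d) (hab : a ≠ b) (hcd : c ≠ d) (hbcad : b * c ≠ a * d) :
    IntegrableOn (fun α : ℝ × ℝ => 1 / ((1 + α.1) * (a + b * α.1 + c * α.2 + d * α.1 * α.2)) ^ 2)
      (Ioi 0 ×ˢ Ioi 0) (volume.prod volume) := by
  have hfiber : ∀ x : ℝ, 0 < x → _ := fun x hx =>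
    integral_Ioi_fiber (c := c) (d := d) (by positivity : 0 < a + b * x) (by positivity)
  rw [IntegrableOn, ← Measure.prod_restrict,
    integrable_prod_iff (Measurable.aestronglyMeasurable (by fun_prop))]
  refine ⟨ae_restrict_of_forall_mem measurableSet_Ioi fun x hx => (hfiber x hx).1, ?_⟩
  refine (integral_Ioi_inv_partialFractions ha hb hc hd hab hcd hbcad).1.congr_fun
    (fun x hx => ?_) measurableSet_Ioi
  dsimp only
  rw [← (hfiber x hx).2]
  exact integral_congr_ae (ae_of_all _ fun y => (norm_of_nonneg (by positivity)).symm)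

/-- for positive reals `a, b, c, d` with `a ≠ b`, `c ≠ d` and
`bc ≠ ad`, the Lebesgue integral over `(0,∞)²` of
`1 / [(1+α₁)(a + bα₁ + cα₂ + dα₁α₂)]²` equals
`1/((a-b)(c-d)) - (1/(bc-ad)) [ b² log(a/b)/(a-b)² + d² log(d/c)/(c-d)² ]`. -/
theorem statement5 (a b c d : ℝ) (ha : 0 < a) (hb : 0 < b) (hc : 0 < c)
    (hd : 0 < d) (hab : a ≠ b) (hcd : c ≠ d) (hbcad : b * c ≠ a * d) :
    (∫ α in (Set.Ioi (0 : ℝ)) ×ˢ (Set.Ioi (0 : ℝ)),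
        1 / ((1 + α.1) * (a + b * α.1 + c * α.2 + d * α.1 * α.2)) ^ 2) =
      1 / ((a - b) * (c - d)) -
        (1 / (b * c - a * d)) *
          (b ^ 2 * Real.log (a / b) / (a - b) ^ 2 +
            d ^ 2 * Real.log (d / c) / (c - d) ^ 2) := by
  rw [Measure.volume_eq_prod,
    setIntegral_prod _ (integrableOn_Ioi_prod_Ioi ha hb hc hd hab hcd hbcad),
    setIntegral_congr_fun measurableSet_Ioi fun x (hx : 0 < x) =>
      (integral_Ioi_fiber (c := c) (d := d) (by positivity : 0 < a + b * x) (by positivity)).2]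
  exact (integral_Ioi_inv_partialFractions ha hb hc hd hab hcd hbcad).2
end

section
/- Let $n \geq 2$ and let $e_1, \ldots, e_n$ denote the standard basis vectors of $\mathbb{R}^n$. The set of extreme points of the convex hull $T([n]) = \mathrm{Conv}(e_1, \ldots, e_n, 2e_1, \ldots, 2e_n)$ is exactly the set $\{e_1, \ldots, e_n, 2e_1, \ldots, 2e_n\}$; in particular, $T([n])$ has exactly $2n$ vertices. -/
/-! Every vertex strictly maximizes a linear functional over the vertex set: `2eᵢ` maximizes
`y ↦ yᵢ`, and `eᵢ` maximizes `y ↦ yᵢ - 2 ∑ⱼ yⱼ`. A strict maximizer of a linear functional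
on `s` is an extreme point of `convexHull s`, because the open half-space below its value,
together with the point itself, is convex and contains `s`. -/

/-- The vertex set `{e₁, …, e_n, 2e₁, …, 2e_n}` of the truncated simplex `T([n])`. -/
def TVerts (n : ℕ) : Set (Fin n → ℝ) :=
  (Set.range fun i : Fin n => Pi.single i (1 : ℝ)) ∪
    (Set.range fun i : Fin n => Pi.single i (2 : ℝ))

section StrictMaximizer

variable {𝕜 E : Type*} [Field 𝕜] [LinearOrder 𝕜] [IsStrictOrderedRing 𝕜]
  [AddCommGroup E] [Module 𝕜 E]

theorem convex_insert_halfSpace_lt (f : E →ₗ[𝕜] 𝕜) (x : E) :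
    Convex 𝕜 (insert x {y | f y < f x}) := by
  have hlt : ∀ {a b : 𝕜} {y z : E}, 0 < a → 0 < b → a + b = 1 → f y < f x → f z ≤ f x →
      f (a • y + b • z) < f x := by
    intro a b y z ha hb hab hy hz
    simp only [map_add, map_smul, smul_eq_mul]
    calc a * f y + b * f z < a * f x + b * f x :=
          add_lt_add_of_lt_of_le (mul_lt_mul_of_pos_left hy ha) (mul_le_mul_of_nonneg_left hz hb.le)
      _ = f x := by rw [← add_mul, hab, one_mul]
  have hle : ∀ {y : E}, y ∈ insert x {y | f y < f x} → f y ≤ f x := by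
    rintro y (rfl | hy)
    exacts [le_rfl, le_of_lt hy]
  refine convex_iff_pairwise_pos.2 fun y hy z hz hyz a b ha hb hab => Or.inr ?_
  rcases eq_or_ne y x with rfl | hyx
  · have hz' : f z < f y := hz.resolve_left (Ne.symm hyz)
    rw [add_comm] at hab ⊢
    exact hlt hb ha hab hz' le_rfl
  · exact hlt ha hb hab (hy.resolve_left hyx) (hle hz)

theorem mem_extremePoints_convexHull_of_forall_lt {s : Set E} {x : E} (f : E →ₗ[𝕜] 𝕜)
    (hx : x ∈ s) (hlt : ∀ y ∈ s, y ≠ x → f y < f x) :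
    x ∈ (convexHull 𝕜 s).extremePoints 𝕜 := by
  have hhull : convexHull 𝕜 s ⊆ insert x {y | f y < f x} :=
    convexHull_min (fun y hy => (eq_or_ne y x).imp id (hlt y hy))
      (convex_insert_halfSpace_lt f x)
  rw [(convex_convexHull 𝕜 s).mem_extremePoints_iff_mem_sdiff_convexHull_sdiff]
  refine ⟨subset_convexHull 𝕜 s hx, fun hx' => lt_irrefl (f x) ?_⟩
  exact convexHull_min (fun y hy => (hhull hy.1).resolve_left hy.2)
    (convex_halfSpace_lt f.isLinear (f x)) hx'

end StrictMaximizer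

theorem Pi.single_left_injective {ι R : Type*} [DecidableEq ι] [Zero R] {a : R}
    (ha : a ≠ 0) : Function.Injective fun i : ι => (Pi.single i a : ι → R) := by
  intro i j hij
  by_contra hne
  exact ha (by simpa [Pi.single_apply, hne] using congrFun hij i)

open Matrix

theorem single_one_mem_extremePoints {n : ℕ} (i : Fin n) :
    Pi.single i 1 ∈ (convexHull ℝ (TVerts n)).extremePoints ℝ := by
  refine mem_extremePoints_convexHull_of_forall_lt (dotProductBilin ℝ ℝ (Pi.single i 1 - 2))
    (Or.inl ⟨i, rfl⟩) ?_
  rintro y (⟨j, rfl⟩ | ⟨j, rfl⟩) hne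
  all_goals rcases eq_or_ne j i with rfl | hji <;> norm_num [dotProduct_single, *] at *

theorem single_two_mem_extremePoints {n : ℕ} (i : Fin n) :
    Pi.single i 2 ∈ (convexHull ℝ (TVerts n)).extremePoints ℝ := by
  refine mem_extremePoints_convexHull_of_forall_lt (LinearMap.proj i) (Or.inr ⟨i, rfl⟩) ?_
  rintro y (⟨j, rfl⟩ | ⟨j, rfl⟩) hne
  all_goals rcases eq_or_ne j i with rfl | hji <;> norm_num [*] at *

theorem ncard_TVerts (n : ℕ) : (TVerts n).ncard = 2 * n := by
  have hne : ∀ i j : Fin n, (Pi.single i 1 : Fin n → ℝ) ≠ Pi.single j 2 := by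
    intro i j hij
    have := congrFun hij i
    rw [Pi.single_eq_same, Pi.single_apply] at this
    split_ifs at this <;> norm_num at this
  rw [TVerts, ← Set.Sum.elim_range, Set.ncard_range_of_injective
    ((Pi.single_left_injective one_ne_zero).sumElim (Pi.single_left_injective two_ne_zero) hne)]
  simp [two_mul]

theorem statement7_general (n : ℕ) :
    Set.extremePoints ℝ (convexHull ℝ (TVerts n)) = TVerts n ∧
    (Set.extremePoints ℝ (convexHull ℝ (TVerts n))).ncard = 2 * n := by
  have hext : Set.extremePoints ℝ (convexHull ℝ (TVerts n)) = TVerts n := by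
    refine extremePoints_convexHull_subset.antisymm ?_
    rintro x (⟨i, rfl⟩ | ⟨i, rfl⟩)
    exacts [single_one_mem_extremePoints i, single_two_mem_extremePoints i]
  exact ⟨hext, hext.symm ▸ ncard_TVerts n⟩

/-- for `n ≥ 2`, the set of extreme points of the truncated simplex
`T([n]) = Conv(e₁,…,e_n, 2e₁,…,2e_n)` is exactly `{e₁,…,e_n, 2e₁,…,2e_n}`;
in particular `T([n])` has exactly `2n` vertices. -/
theorem statement7 (n : ℕ) (hn : 2 ≤ n) :
    Set.extremePoints ℝ (convexHull ℝ (TVerts n)) = TVerts n ∧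
    (Set.extremePoints ℝ (convexHull ℝ (TVerts n))).ncard = 2 * n :=
  statement7_general n
end

section
/- Let $n \geq 2$. The $n$-dimensional Lebesgue measure of the set $\{x \in [0,1]^n : 1 \leq x_1 + \cdots + x_n \leq 2\}$ equals $(2^n - n - 1)/n!$. Equivalently, the normalized volume (Euclidean volume times $n!$) of the hypersimplex $\Delta_{n,2}$ equals the Eulerian number $2^n - n - 1$. -/
/-!
Slicing off the first coordinate, `V_{n+1}(t) = ∫₀¹ V_n(t - a) da` for the volume
`V_n(t) = vol {x ∈ [0,1]ⁿ : ∑ xᵢ ≤ t}`. For `t ≤ 2` only two terms of the Irwin–Hall formula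
survive, `V_n(t) = (t₊ⁿ - n (t - 1)₊ⁿ) / n!`, and this form is reproduced by the integral
recursion. Inside the cube, `{∑ xᵢ ≤ 2}` is the union of `{∑ xᵢ ≤ 1}` and the hypersimplex,
which meet only in the null hyperplane `∑ xᵢ = 1`; so the hypersimplex has volume
`V_n(2) - V_n(1) = (2ⁿ - n - 1) / n!`.
-/

open MeasureTheory Set
open scoped Nat Topology

lemma hasDerivAt_max_zero_pow {n : ℕ} (hn : n ≠ 0) (x : ℝ) :
    HasDerivAt (fun y : ℝ => max y 0 ^ (n + 1)) ((n + 1) * max x 0 ^ n) x := by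
  refine hasDerivAt_of_hasDerivAt_of_ne' (f := fun y : ℝ => max y 0 ^ (n + 1))
    (g := fun y => (n + 1) * max y 0 ^ n) (x := 0) (fun y hy => ?_) (by fun_prop) (by fun_prop) x
  rcases hy.lt_or_gt with hy | hy
  · have hzero : (fun y : ℝ => max y 0 ^ (n + 1)) =ᶠ[𝓝 y] fun _ => 0 := by
      filter_upwards [Iio_mem_nhds hy] with z (hz : z < 0)
      simp [max_eq_right (le_of_lt hz)]
    simpa [max_eq_right hy.le, hn] using (hasDerivAt_const y (0 : ℝ)).congr_of_eventuallyEq hzero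
  · have hpow : (fun y : ℝ => max y 0 ^ (n + 1)) =ᶠ[𝓝 y] fun y => y ^ (n + 1) := by
      filter_upwards [Ioi_mem_nhds hy] with z (hz : 0 < z)
      rw [max_eq_left (le_of_lt hz)]
    simpa [max_eq_left hy.le] using (hasDerivAt_pow (n + 1) y).congr_of_eventuallyEq hpow

lemma integral_max_zero_pow {n : ℕ} (hn : n ≠ 0) (a b : ℝ) :
    ∫ x in a..b, max x 0 ^ n = (max b 0 ^ (n + 1) - max a 0 ^ (n + 1)) / (n + 1) := by
  have hderiv (x : ℝ) :
      HasDerivAt (fun y : ℝ => max y 0 ^ (n + 1) / (n + 1)) (max x 0 ^ n) x := by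
    simpa [mul_div_cancel_left₀ _ (by positivity : (n : ℝ) + 1 ≠ 0)] using
      (hasDerivAt_max_zero_pow hn x).div_const ((n : ℝ) + 1)
  have hint : IntervalIntegrable (fun x : ℝ => max x 0 ^ n) volume a b :=
    (by fun_prop : Continuous fun x : ℝ => max x 0 ^ n).intervalIntegrable _ _
  rw [intervalIntegral.integral_eq_sub_of_hasDerivAt (fun x _ => hderiv x) hint, sub_div]

def cubeSublevel (n : ℕ) (t : ℝ) : Set (Fin n → ℝ) :=
  {x | (∀ i, 0 ≤ x i ∧ x i ≤ 1) ∧ ∑ i, x i ≤ t}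

lemma measurableSet_cubeSublevel (n : ℕ) (t : ℝ) : MeasurableSet (cubeSublevel n t) := by
  have hcube : MeasurableSet {x : Fin n → ℝ | ∀ i, 0 ≤ x i ∧ x i ≤ 1} := by
    rw [ofPred_forall]
    exact .iInter fun i => measurable_pi_apply i measurableSet_Icc
  exact hcube.inter (measurableSet_le (Finset.measurable_sum _ fun i _ => measurable_pi_apply i)
    measurable_const)

lemma volume_cubeSublevel_succ (n : ℕ) (t : ℝ) :
    volume (cubeSublevel (n + 1) t) = ∫⁻ a in Icc 0 1, volume (cubeSublevel n (t - a)) := by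
  let e := MeasurableEquiv.piFinSuccAbove (fun _ : Fin (n + 1) => ℝ) 0
  have hslice (a : ℝ) : Prod.mk a ⁻¹' (e.symm ⁻¹' cubeSublevel (n + 1) t) =
      if a ∈ Icc 0 1 then cubeSublevel n (t - a) else ∅ := by
    ext y
    by_cases ha : a ∈ Icc (0 : ℝ) 1 <;> rw [mem_Icc] at ha <;>
      simp [e, cubeSublevel, Fin.forall_fin_succ, Fin.sum_univ_succ, le_sub_iff_add_le', ha]
  rw [← (volume_preserving_piFinSuccAbove _ 0).symm.measure_preimage_equiv,
    Measure.volume_eq_prod,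
    Measure.prod_apply ((measurableSet_cubeSublevel _ _).preimage e.symm.measurable),
    ← lintegral_indicator measurableSet_Icc]
  congr 1 with a
  rw [hslice]
  by_cases ha : a ∈ Icc (0 : ℝ) 1 <;> simp [ha]

/-- The Irwin–Hall distribution function `(1/n!) ∑ₖ (-1)ᵏ (n choose k) (t - k)₊ⁿ` truncated
after `k = 1`; it is exact for `t ≤ 2`. -/
noncomputable def irwinHallCDF₂ (n : ℕ) (t : ℝ) : ℝ :=
  (max t 0 ^ n - n * max (t - 1) 0 ^ n) / n !

lemma volume_cubeSublevel_one (t : ℝ) :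
    volume (cubeSublevel 1 t) = ENNReal.ofReal (irwinHallCDF₂ 1 t) := by
  have hpre : cubeSublevel 1 t = MeasurableEquiv.funUnique (Fin 1) ℝ ⁻¹' Icc 0 (min 1 t) := by
    ext x
    simp [cubeSublevel, MeasurableEquiv.funUnique, Fin.forall_fin_one, and_assoc]
  have hclamp : irwinHallCDF₂ 1 t = max (min 1 t) 0 := by
    simp only [irwinHallCDF₂, pow_one, Nat.cast_one, one_mul, Nat.factorial_one, div_one]
    grind
  have hvol : volume (cubeSublevel 1 t) = volume (Icc 0 (min 1 t)) :=
    hpre ▸ (volume_preserving_funUnique (Fin 1) ℝ).measure_preimage_equiv _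
  rw [hvol, Real.volume_Icc, hclamp, sub_zero, ENNReal.ofReal_max, ENNReal.ofReal_zero,
    max_eq_left zero_le]

lemma irwinHallCDF₂_nonneg {n : ℕ} (hn : n ≠ 0) {t : ℝ} (ht : t ≤ 2) :
    0 ≤ irwinHallCDF₂ n t := by
  refine div_nonneg ?_ (by positivity)
  rcases le_or_gt t 1 with h | h
  · simp [max_eq_right (by linarith : t - 1 ≤ 0), hn]
  · -- Bernoulli's inequality `1 + n (t - 1) ≤ tⁿ` together with `(t - 1)ⁿ ≤ t - 1`
    rw [max_eq_left (by linarith : (0:ℝ) ≤ t), max_eq_left (by linarith : (0:ℝ) ≤ t - 1)]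
    have hpow : (t - 1) ^ n ≤ t - 1 := pow_le_of_le_one (by linarith) (by linarith) hn
    have hbern : 1 + n * (t - 1) ≤ (1 + (t - 1)) ^ n := one_add_mul_le_pow (by linarith) n
    rw [add_sub_cancel] at hbern
    nlinarith

lemma integral_irwinHallCDF₂_sub {n : ℕ} (hn : n ≠ 0) {t : ℝ} (ht : t ≤ 2) :
    ∫ a in (0:ℝ)..1, irwinHallCDF₂ n (t - a) = irwinHallCDF₂ (n + 1) t := by
  have hshift (c : ℝ) : ∫ a in (0:ℝ)..1, max (c - a) 0 ^ n =
      (max c 0 ^ (n + 1) - max (c - 1) 0 ^ (n + 1)) / (n + 1) := by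
    rw [intervalIntegral.integral_comp_sub_left (fun x => max x 0 ^ n), integral_max_zero_pow hn,
      sub_zero]
  have hint (c : ℝ) : IntervalIntegrable (fun a : ℝ => max (c - a) 0 ^ n) volume 0 1 :=
    (by fun_prop : Continuous fun a : ℝ => max (c - a) 0 ^ n).intervalIntegrable _ _
  simp only [irwinHallCDF₂, sub_right_comm _ _ (1 : ℝ)]
  rw [intervalIntegral.integral_div, intervalIntegral.integral_sub (hint t) ((hint _).const_mul _),
    intervalIntegral.integral_const_mul, hshift, hshift, max_eq_right (by linarith : t - 1 - 1 ≤ 0),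
    zero_pow (by omega), Nat.factorial_succ]
  push_cast
  field_simp
  ring

lemma volume_cubeSublevel {n : ℕ} (hn : n ≠ 0) {t : ℝ} (ht : t ≤ 2) :
    volume (cubeSublevel n t) = ENNReal.ofReal (irwinHallCDF₂ n t) := by
  induction n generalizing t with
  | zero => exact absurd rfl hn
  | succ n ih =>
    rcases eq_or_ne n 0 with rfl | hn
    · exact volume_cubeSublevel_one t
    have hcont : Continuous fun a => irwinHallCDF₂ n (t - a) := by
      unfold irwinHallCDF₂
      fun_prop
    have hnonneg : 0 ≤ᵐ[volume.restrict (Icc 0 1)] fun a => irwinHallCDF₂ n (t - a) :=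
      (ae_restrict_iff' measurableSet_Icc).2 <| ae_of_all _ fun a ha =>
        irwinHallCDF₂_nonneg hn (by linarith [ha.1])
    calc volume (cubeSublevel (n + 1) t)
        = ∫⁻ a in Icc 0 1, ENNReal.ofReal (irwinHallCDF₂ n (t - a)) := by
          rw [volume_cubeSublevel_succ]
          exact setLIntegral_congr_fun measurableSet_Icc fun a ha => ih hn (by linarith [ha.1])
      _ = ENNReal.ofReal (∫ a in (0:ℝ)..1, irwinHallCDF₂ n (t - a)) := by
          rw [← ofReal_integral_eq_lintegral_ofReal hcont.integrableOn_Icc hnonneg,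
            integral_Icc_eq_integral_Ioc, intervalIntegral.integral_of_le zero_le_one]
      _ = ENNReal.ofReal (irwinHallCDF₂ (n + 1) t) := by
          rw [integral_irwinHallCDF₂_sub hn ht]

lemma addHaar_preimage_singleton_eq_zero {E : Type*} [NormedAddCommGroup E] [NormedSpace ℝ E]
    [MeasurableSpace E] [BorelSpace E] [FiniteDimensional ℝ E] (μ : Measure E)
    [μ.IsAddHaarMeasure] {f : E →ₗ[ℝ] ℝ} (hf : f ≠ 0) (c : ℝ) : μ (f ⁻¹' {c}) = 0 := by
  rcases (f ⁻¹' {c}).eq_empty_or_nonempty with h | ⟨x₀, hx₀⟩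
  · rw [h, measure_empty]
  have htrans : f ⁻¹' {c} = (· + -x₀) ⁻¹' (LinearMap.ker f : Set E) := by
    ext x
    simp_all [sub_eq_zero, ← sub_eq_add_neg]
  rw [htrans, measure_preimage_add_right]
  exact Measure.addHaar_submodule μ _ (mt LinearMap.ker_eq_top.1 hf)

lemma volume_sum_eq_eq_zero {n : ℕ} (hn : n ≠ 0) (c : ℝ) :
    volume {x : Fin n → ℝ | ∑ i, x i = c} = 0 := by
  let sum : (Fin n → ℝ) →ₗ[ℝ] ℝ := ∑ i, LinearMap.proj i
  have hsum : sum ≠ 0 := fun h => by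
    simpa [sum] using LinearMap.congr_fun h (Pi.single ⟨0, Nat.pos_of_ne_zero hn⟩ 1)
  simpa [sum, preimage] using addHaar_preimage_singleton_eq_zero volume hsum c

lemma volume_cubeSublevel_add_volume_sum_mem_Icc {n : ℕ} (hn : n ≠ 0) {s t : ℝ} (hst : s ≤ t) :
    volume (cubeSublevel n s) +
        volume {x : Fin n → ℝ | (∀ i, 0 ≤ x i ∧ x i ≤ 1) ∧ s ≤ ∑ i, x i ∧ ∑ i, x i ≤ t} =
      volume (cubeSublevel n t) := by
  set slab := {x : Fin n → ℝ | (∀ i, 0 ≤ x i ∧ x i ≤ 1) ∧ s ≤ ∑ i, x i ∧ ∑ i, x i ≤ t}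
  have hunion : cubeSublevel n s ∪ slab = cubeSublevel n t := by
    ext x
    simp only [cubeSublevel, slab, mem_union, mem_ofPred_eq]
    constructor
    · rintro (⟨hcube, hs⟩ | ⟨hcube, -, ht⟩) <;> exact ⟨hcube, by linarith⟩
    · rintro ⟨hcube, ht⟩
      exact (le_total (∑ i, x i) s).imp (⟨hcube, ·⟩) (⟨hcube, ·, ht⟩)
  have hdisj : AEDisjoint volume (cubeSublevel n s) slab :=
    measure_mono_null (fun x ⟨⟨_, hle⟩, _, hge, _⟩ => le_antisymm hle hge)
      (volume_sum_eq_eq_zero hn s)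
  rw [← hunion, measure_union₀' (measurableSet_cubeSublevel n s).nullMeasurableSet hdisj]

/-- for `n ≥ 2`, the Lebesgue measure of the hypersimplex
`{x ∈ [0,1]ⁿ : 1 ≤ ∑ xᵢ ≤ 2}` is `(2ⁿ - n - 1)/n!`; equivalently the normalized
volume of `Δ_{n,2}` is the Eulerian number `2ⁿ - n - 1`. -/
theorem statement12 (n : ℕ) (hn : 2 ≤ n) :
    volume {x : Fin n → ℝ |
        (∀ i, 0 ≤ x i ∧ x i ≤ 1) ∧ 1 ≤ ∑ i, x i ∧ ∑ i, x i ≤ 2} =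
      ENNReal.ofReal ((2 ^ n - n - 1 : ℝ) / n.factorial) := by
  have hn0 : n ≠ 0 := by omega
  have hsplit := volume_cubeSublevel_add_volume_sum_mem_Icc hn0 one_le_two
  rw [volume_cubeSublevel hn0 one_le_two, volume_cubeSublevel hn0 le_rfl] at hsplit
  have hdiff : irwinHallCDF₂ n 2 - irwinHallCDF₂ n 1 = (2 ^ n - n - 1) / n ! := by
    norm_num [irwinHallCDF₂, hn0]
    ring
  rw [← hdiff, ENNReal.ofReal_sub _ (irwinHallCDF₂_nonneg hn0 one_le_two)]
  exact ENNReal.eq_sub_of_add_eq ENNReal.ofReal_ne_top ((add_comm _ _).trans hsplit)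
end

section
/- Let $E \geq 2$ and let $G(\alpha) = \sigma_{E-1}(\alpha) + s\,\alpha_1\cdots\alpha_E \in \mathbb{C}[\alpha_1,\ldots,\alpha_E]$, where $\sigma_{E-1}$ is the elementary symmetric polynomial of degree $E-1$ in $E$ variables and $s \in \mathbb{C}$ with $s \neq 0$. Then there exists a nonzero polynomial $p \in \mathbb{C}[\mu, \nu_1, \ldots, \nu_E]$ such that for all $(\mu, \nu_1, \ldots, \nu_E) \in \mathbb{C}^{E+1}$ with $p(\mu,\nu) \neq 0$, the system of critical point equations $\nu_e\, G(\alpha) + \mu\, \alpha_e\, \frac{\partial G}{\partial \alpha_e}(\alpha) = 0$ for $e = 1, \ldots, E$ has exactly one solution $\alpha \in (\mathbb{C}^*)^E$ with $G(\alpha) \neq 0$, given explicitly by $\alpha_e = -\dfrac{(E-1)\mu + \nu_1 + \cdots + \nu_E}{s\,(\mu + \nu_e)}$ for $e = 1, \ldots, E$. -/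
open MvPolynomial

/-- The graph polynomial `𝒢 = σ_{E-1}(α) + s·α₁⋯α_E` of the banana diagram
`B_E` with zero internal and external masses. -/
noncomputable def bananaG (E : ℕ) (s : ℂ) : MvPolynomial (Fin E) ℂ :=
  esymm (Fin E) ℂ (E - 1) + C s * ∏ i, X i

open Finset in
lemma pderiv_prod_X {σ : Type*} [DecidableEq σ] (t : Finset σ) (e : σ) :
    pderiv e (∏ i ∈ t, (X i : MvPolynomial σ ℂ)) =
      if e ∈ t then ∏ i ∈ t.erase e, X i else 0 := by
  induction t using Finset.induction_on with
  | empty => simp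
  | @insert a t ha ih =>
    rw [Finset.prod_insert ha, pderiv_mul, ih]
    by_cases hea : e = a
    · subst hea
      simp [pderiv_X_self, ha, Finset.erase_insert ha]
    · rw [pderiv_X_of_ne (Ne.symm hea)]
      by_cases het : e ∈ t
      · have h1 : e ∈ insert a t := Finset.mem_insert_of_mem het
        have h2 : a ∉ t.erase e := fun h => ha (Finset.mem_of_mem_erase h)
        rw [if_pos het, if_pos h1, Finset.erase_insert_of_ne (Ne.symm hea),
          Finset.prod_insert h2]
        ring
      · have h1 : e ∉ insert a t := by
          simp [Finset.mem_insert, hea, het]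
        rw [if_neg het, if_neg h1]
        ring

open Finset in
lemma esymm_sub_one (E : ℕ) (hE : 1 ≤ E) :
    esymm (Fin E) ℂ (E - 1) = ∑ e : Fin E, ∏ i ∈ univ.erase e, X i := by
  rw [esymm]
  symm
  apply Finset.sum_bij (i := fun (e : Fin E) (_ : e ∈ univ) => univ.erase e)
  · intro a _
    rw [Finset.mem_powersetCard]
    refine ⟨Finset.subset_univ _, ?_⟩
    rw [Finset.card_erase_of_mem (Finset.mem_univ _), Finset.card_univ, Fintype.card_fin]
  · intro a₁ _ a₂ _ h
    by_contra hne
    have : a₁ ∈ univ.erase a₂ := Finset.mem_erase.2 ⟨hne, Finset.mem_univ _⟩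
    rw [← h] at this
    exact (Finset.mem_erase.1 this).1 rfl
  · intro t ht
    rw [Finset.mem_powersetCard] at ht
    obtain ⟨ht1, ht2⟩ := ht
    have htu : t ≠ univ := by
      intro h
      rw [h, Finset.card_univ, Fintype.card_fin] at ht2
      omega
    obtain ⟨e, he, het⟩ := Finset.exists_of_ssubset (Finset.ssubset_univ_iff.2 htu)
    refine ⟨e, Finset.mem_univ _, ?_⟩
    symm
    apply Finset.eq_of_subset_of_card_le
    · exact Finset.subset_erase.2 ⟨ht1, het⟩
    · rw [Finset.card_erase_of_mem (Finset.mem_univ _), Finset.card_univ, Fintype.card_fin, ht2]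
  · intro a _; rfl

open Finset in
lemma key_identity (E : ℕ) (hE : 1 ≤ E) (s : ℂ) (e : Fin E) :
    X e * pderiv e (bananaG E s) =
      bananaG E s - ∏ i ∈ univ.erase e, X i := by
  have he : e ∈ (univ : Finset (Fin E)) := Finset.mem_univ e
  rw [bananaG, esymm_sub_one E hE, map_add, map_sum]
  have hCs : pderiv e (C s * ∏ i, (X i : MvPolynomial (Fin E) ℂ)) =
      C s * ∏ i ∈ univ.erase e, X i := by
    rw [pderiv_mul, pderiv_C, pderiv_prod_X, if_pos he]
    ring
  rw [hCs]
  simp_rw [pderiv_prod_X]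
  rw [mul_add, Finset.mul_sum]
  have hsum : ∑ f : Fin E, X e *
      (if e ∈ univ.erase f then ∏ i ∈ (univ.erase f).erase e, (X i : MvPolynomial (Fin E) ℂ)
        else 0) = ∑ f ∈ univ.erase e, ∏ i ∈ univ.erase f, X i := by
    rw [← Finset.sum_erase (univ : Finset (Fin E)) (a := e)
      (f := fun f => X e * (if e ∈ univ.erase f then
        ∏ i ∈ (univ.erase f).erase e, (X i : MvPolynomial (Fin E) ℂ) else 0))
      (by simp)]
    apply Finset.sum_congr rfl
    intro f hf
    have hef : e ≠ f := fun h => (Finset.mem_erase.1 hf).1 h.symm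
    have hmem : e ∈ univ.erase f := Finset.mem_erase.2 ⟨hef, Finset.mem_univ _⟩
    rw [if_pos hmem, Finset.mul_prod_erase _ _ hmem]
  rw [hsum, Finset.sum_erase_eq_sub he]
  have : X e * (C s * ∏ i ∈ univ.erase e, (X i : MvPolynomial (Fin E) ℂ)) =
      C s * ∏ i, X i := by
    rw [← Finset.mul_prod_erase univ _ he]; ring
  rw [this]
  ring

open Finset in
lemma eval_key (E : ℕ) (hE : 1 ≤ E) (s : ℂ) (α : Fin E → ℂ) (e : Fin E) :
    α e * eval α (pderiv e (bananaG E s)) =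
      eval α (bananaG E s) - ∏ i ∈ univ.erase e, α i := by
  have := congrArg (eval α) (key_identity E hE s e)
  simpa using this

open Finset in
lemma eval_bananaG (E : ℕ) (hE : 1 ≤ E) (s : ℂ) (α : Fin E → ℂ) :
    eval α (bananaG E s) = (∑ e : Fin E, ∏ i ∈ univ.erase e, α i) + s * ∏ i, α i := by
  rw [bananaG, esymm_sub_one E hE]
  simp

/-- for `E ≥ 2` and `s ≠ 0`, there is a nonzero polynomial `p` in
the parameters `(μ, ν₁, …, ν_E)` such that whenever `p(μ,ν) ≠ 0`, the cleared
critical point equations `ν_e 𝒢(α) + μ α_e ∂𝒢/∂α_e(α) = 0` (for `e = 1,…,E`)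
have exactly one solution `α ∈ (ℂ*)^E` with `𝒢(α) ≠ 0`, namely
`α_e = -((E-1)μ + ν₁ + ⋯ + ν_E)/(s(μ + ν_e))`. -/
theorem statement17 (E : ℕ) (hE : 2 ≤ E) (s : ℂ) (hs : s ≠ 0) :
    ∃ p : MvPolynomial (Fin (E + 1)) ℂ, p ≠ 0 ∧
      ∀ (μ : ℂ) (ν : Fin E → ℂ), eval (Fin.cons μ ν) p ≠ 0 →
        {α : Fin E → ℂ |
            (∀ e, α e ≠ 0) ∧ eval α (bananaG E s) ≠ 0 ∧
              ∀ e : Fin E,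
                ν e * eval α (bananaG E s) +
                  μ * α e * eval α (pderiv e (bananaG E s)) = 0} =
          {fun e : Fin E =>
            -(((E : ℂ) - 1) * μ + ∑ i, ν i) / (s * (μ + ν e))} := by
  classical
  have hE1 : 1 ≤ E := by omega
  have hE1' : ((E : ℂ) - 1) ≠ 0 := by
    have : (1 : ℂ) ≠ (E : ℂ) := by exact_mod_cast (by omega : (1 : ℕ) ≠ E)
    exact sub_ne_zero.2 this.symm
  refine ⟨X 0 * (C ((E : ℂ) - 1) * X 0 + ∑ e : Fin E, X e.succ) *
      ∏ e : Fin E, (X 0 + X e.succ), ?_, ?_⟩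
  · -- nonzero
    intro h0
    have h1 := congrArg (eval (Fin.cons 1 (fun _ => (0 : ℂ)))) h0
    simp [Fin.cons_zero, Fin.cons_succ, hE1'] at h1
  · intro μ ν hp
    have hpeval : eval (Fin.cons μ ν)
        (X 0 * (C ((E : ℂ) - 1) * X 0 + ∑ e : Fin E, X e.succ) *
          ∏ e : Fin E, (X 0 + X e.succ)) =
        μ * (((((E : ℂ) - 1) * μ + ∑ i, ν i)) * ∏ e : Fin E, (μ + ν e)) := by
      simp [Fin.cons_zero, Fin.cons_succ, mul_assoc]
    rw [hpeval] at hp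
    have hμ : μ ≠ 0 := fun h => hp (by rw [h]; ring)
    have hA : (((E : ℂ) - 1) * μ + ∑ i, ν i) ≠ 0 := by
      intro h; apply hp; rw [h]; ring
    have hμν : ∀ e : Fin E, μ + ν e ≠ 0 := by
      intro e he
      apply hp
      rw [Finset.prod_eq_zero (Finset.mem_univ e) he]
      ring
    set A : ℂ := ((E : ℂ) - 1) * μ + ∑ i, ν i with hA_def
    set β : Fin E → ℂ := fun e => -A / (s * (μ + ν e)) with hβ_def
    have hβ0 : ∀ e, β e ≠ 0 := fun e =>
      div_ne_zero (neg_ne_zero.2 hA) (mul_ne_zero hs (hμν e))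
    have hsumμν : ∑ e : Fin E, (μ + ν e) = (E : ℂ) * μ + ∑ i, ν i := by
      rw [Finset.sum_add_distrib, Finset.sum_const, Finset.card_univ, Fintype.card_fin,
        nsmul_eq_mul]
    rw [Set.eq_singleton_iff_unique_mem]
    constructor
    · -- the explicit point is a solution
      set P : ℂ := ∏ i, β i with hP_def
      have hP : P ≠ 0 := Finset.prod_ne_zero_iff.2 fun e _ => hβ0 e
      have hq : ∀ e : Fin E, β e * ∏ i ∈ Finset.univ.erase e, β i = P :=
        fun e => Finset.mul_prod_erase _ _ (Finset.mem_univ e)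
      have hbe : ∀ e : Fin E, β e * (s * (μ + ν e)) = -A := fun e =>
        div_mul_cancel₀ (-A) (mul_ne_zero hs (hμν e))
      have hqe : ∀ e : Fin E,
          A * ∏ i ∈ Finset.univ.erase e, β i = -(P * s * (μ + ν e)) := by
        intro e
        linear_combination (-(s * (μ + ν e))) * hq e +
          (∏ i ∈ Finset.univ.erase e, β i) * hbe e
      have hgdef : eval β (bananaG E s) =
          (∑ e : Fin E, ∏ i ∈ Finset.univ.erase e, β i) + s * P :=
        eval_bananaG E hE1 s β
      have hsq : A * (∑ e : Fin E, ∏ i ∈ Finset.univ.erase e, β i) =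
          -(P * s * ((E : ℂ) * μ + ∑ i, ν i)) := by
        rw [Finset.mul_sum, ← hsumμν, Finset.mul_sum, ← Finset.sum_neg_distrib]
        exact Finset.sum_congr rfl fun e _ => by linear_combination hqe e
      have hgA : A * eval β (bananaG E s) = -(P * s * μ) := by
        linear_combination A * hgdef + hsq + (s * P) * hA_def
      have hgne : eval β (bananaG E s) ≠ 0 := by
        intro h
        rw [h, mul_zero] at hgA
        exact hμ ((mul_eq_zero.1 (neg_eq_zero.1 hgA.symm)).resolve_left
          (mul_ne_zero hP hs))
      refine ⟨hβ0, hgne, ?_⟩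
      intro e
      rw [mul_assoc, eval_key E hE1 s β e]
      apply mul_left_cancel₀ hA
      linear_combination (ν e + μ) * hgA - μ * hqe e
    · -- uniqueness
      rintro α ⟨hα0, hg0, heq⟩
      set g : ℂ := eval α (bananaG E s) with hg_def
      set P : ℂ := ∏ i, α i with hP_def
      have hq : ∀ e : Fin E, α e * ∏ i ∈ Finset.univ.erase e, α i = P :=
        fun e => Finset.mul_prod_erase _ _ (Finset.mem_univ e)
      have he1 : ∀ e : Fin E,
          (μ + ν e) * g = μ * ∏ i ∈ Finset.univ.erase e, α i := by
        intro e
        have hkey := eval_key E hE1 s α e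
        have h := heq e
        rw [mul_assoc, hkey] at h
        linear_combination h
      have hgdef : g = (∑ e : Fin E, ∏ i ∈ Finset.univ.erase e, α i) + s * P :=
        eval_bananaG E hE1 s α
      have hs1 : ((E : ℂ) * μ + ∑ i, ν i) * g =
          μ * ∑ e : Fin E, ∏ i ∈ Finset.univ.erase e, α i := by
        rw [← hsumμν, Finset.sum_mul, Finset.mul_sum]
        exact Finset.sum_congr rfl fun e _ => he1 e
      have hPg : s * μ * P = -(A * g) := by
        rw [hA_def]
        linear_combination hs1 - μ * hgdef
      funext e
      show α e = -A / (s * (μ + ν e))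
      rw [eq_div_iff (mul_ne_zero hs (hμν e))]
      apply mul_right_cancel₀ hg0
      linear_combination s * α e * he1 e + s * μ * hq e + hPg
end
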